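/- arXiv:2503.00227 — 3 statements merged into one kernel-verified Lean document; each statement's English description precedes it below -/
import Mathlib

section
/- Define J : [0,1] × [0,1] → ℝ by J(a, ã) = 2a² − 4aã + ã² + ã. Then there is no a ∈ [0,1] such that J(a, a) = sup_{ã ∈ [0,1]} J(a, ã). In particular, the one-step mean-field game of Example 1 admits no standard (pure) Nash equilibrium. -/
open Set

/-! A Nash equilibrium `a` must do at least as well as deviating to either endpoint. Deviating to
`0` is unprofitable only if `a (1 - 3a) ≥ 0`, deviating to `1` only if `(3a - 2)(a - 1) ≤ 0`; the
difference of the two conditions forces `a ≥ 1/2`, and then the first one fails. -/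

theorem le_iSup_Icc_of_continuous {f : ℝ → ℝ} (hf : Continuous f) {a b x : ℝ}
    (hx : x ∈ Icc a b) : f x ≤ ⨆ y : Icc a b, f y :=
  le_ciSup (isCompact_range (hf.comp continuous_subtype_val)).bddAbove ⟨x, hx⟩

/-- the one-step mean-field game of Example 1, with value
`J(a, b) = 2a² − 4ab + b² + b` (here `b` is the representative player's own action),
admits no standard (pure) Nash equilibrium: no `a ∈ [0,1]` satisfies
`J(a,a) = sup_{b ∈ [0,1]} J(a,b)`. -/
theorem stmt4
    (J : ℝ → ℝ → ℝ)
    (hJ : ∀ a b, J a b = 2 * a ^ 2 - 4 * a * b + b ^ 2 + b) :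
    ¬ ∃ a ∈ Icc (0:ℝ) 1, J a a = ⨆ b : Icc (0:ℝ) 1, J a b := by
  rintro ⟨a, -, heq⟩
  have hcont : Continuous (J a) := by
    rw [funext (hJ a)]
    fun_prop
  have h0 : J a 0 ≤ J a a := heq ▸ le_iSup_Icc_of_continuous hcont (by norm_num)
  have h1 : J a 1 ≤ J a a := heq ▸ le_iSup_Icc_of_continuous hcont (by norm_num)
  rw [hJ, hJ] at h0 h1
  have ha : 1 / 2 ≤ a := by nlinarith
  nlinarith
end

section
/- For μ a Borel probability measure on [0,1], let m(μ) = ∫₀¹ a dμ(a) and define J(μ, ã) = 2·m(μ)² − 4·m(μ)·ã + ã² + ã for ã ∈ [0,1]. Call μ a relaxed equilibrium if every ã in the topological support of μ satisfies J(μ, ã) = sup_{b ∈ [0,1]} J(μ, b). Then μ is a relaxed equilibrium if and only if μ = (1/2)·(δ₀ + δ₁), where δ₀ and δ₁ are the Dirac measures at 0 and 1. In particular, the relaxed equilibrium of Example 1 exists and is unique. -/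
open Set MeasureTheory
open scoped ENNReal

/-- The topological support of a measure on `ℝ`: the set of points all of whose
neighborhoods have positive measure. -/
def measSupport (μ : Measure ℝ) : Set ℝ := {x | ∀ U ∈ nhds x, μ U ≠ 0}

/-- The mean action `m(μ) = ∫ a dμ(a)` of an action distribution `μ`. -/
noncomputable def meanAction (μ : Measure ℝ) : ℝ := ∫ a, a ∂μ

/-- The value of the representative player in Example 1:
`J(μ, b) = 2 m(μ)² − 4 m(μ) b + b² + b`. -/
noncomputable def Jex1 (μ : Measure ℝ) (b : ℝ) : ℝ :=
  2 * (meanAction μ) ^ 2 - 4 * (meanAction μ) * b + b ^ 2 + b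

lemma measSupport_compl_null (μ : Measure ℝ) : μ (measSupport μ)ᶜ = 0 := by
  apply measure_null_of_locally_null
  intro x hx
  simp only [measSupport, mem_compl_iff, mem_setOf_eq, not_forall] at hx
  obtain ⟨U, hU, hU0⟩ := hx
  exact ⟨U, mem_nhdsWithin_of_mem_nhds hU, by simpa using hU0⟩

lemma mem_measSupport_of_singleton {μ : Measure ℝ} {x : ℝ} (hx : μ {x} ≠ 0) :
    x ∈ measSupport μ := fun _U hU h0 =>
  hx (measure_mono_null (singleton_subset_iff.2 (mem_of_mem_nhds hU)) h0)

lemma mean_half :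
    meanAction ((1/2 : ℝ≥0∞) • (Measure.dirac (0:ℝ) + Measure.dirac (1:ℝ))) = 1/2 := by
  have hi : ∀ a : ℝ, Integrable (fun b : ℝ => b) (Measure.dirac a) := fun a =>
    (integrable_const a).congr
      (by rw [Filter.eventuallyEq_comm, ae_dirac_eq]; exact Filter.eventually_pure.2 rfl)
  rw [meanAction, integral_smul_measure, integral_add_measure (hi 0) (hi 1), integral_dirac,
    integral_dirac]
  simp

/-- a Borel probability measure `μ` on `[0,1]` is a relaxed equilibrium
of Example 1 (every action in its support maximizes `Jex1 μ` over `[0,1]`)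
iff `μ = (δ₀ + δ₁)/2`. -/
theorem stmt6
    (μ : Measure ℝ) [IsProbabilityMeasure μ] (hμ : μ (Icc (0:ℝ) 1) = 1) :
    (∀ a ∈ measSupport μ, Jex1 μ a = ⨆ b : Icc (0:ℝ) 1, Jex1 μ b)
    ↔ μ = (1/2 : ℝ≥0∞) • (Measure.dirac (0:ℝ) + Measure.dirac (1:ℝ)) := by
  haveI : Nonempty (Icc (0:ℝ) 1) := ⟨⟨0, by norm_num⟩⟩
  constructor
  · intro hEq
    set m := meanAction μ with hm
    have hcompl : μ (Icc (0:ℝ) 1)ᶜ = 0 := by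
      have h := measure_compl (measurableSet_Icc (a := (0:ℝ)) (b := 1)) (measure_ne_top μ _)
      rw [hμ, measure_univ] at h
      simpa using h
    have hsupp_sub : measSupport μ ⊆ Icc 0 1 := by
      intro x hx
      by_contra hxI
      exact hx _ ((isClosed_Icc.isOpen_compl).mem_nhds hxI) hcompl
    have hbdd : BddAbove (range fun b : Icc (0:ℝ) 1 => Jex1 μ (b : ℝ)) := by
      refine ⟨2 * m ^ 2 + 4 * |m| + 2, ?_⟩
      rintro y ⟨b, rfl⟩
      have hb0 := b.2.1
      have hb1 := b.2.2
      simp only [Jex1, ← hm]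
      nlinarith [abs_nonneg m, le_abs_self m, neg_abs_le m,
        mul_le_mul_of_nonneg_right (neg_abs_le m) hb0,
        mul_nonneg (abs_nonneg m) (by linarith : (0:ℝ) ≤ 1 - (b:ℝ)),
        sq_nonneg ((b:ℝ))]
    have hle : ∀ b : ℝ, b ∈ Icc (0:ℝ) 1 → Jex1 μ b ≤ ⨆ b : Icc (0:ℝ) 1, Jex1 μ (b : ℝ) :=
      fun b hb => le_ciSup hbdd ⟨b, hb⟩
    have hJ0 := hle 0 (by norm_num)
    have hJ1 := hle 1 (by norm_num)
    have hsupp01 : measSupport μ ⊆ ({0, 1} : Set ℝ) := by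
      intro a ha
      have haI := hsupp_sub ha
      have hJa := hEq a ha
      by_contra h01
      simp only [mem_insert_iff, mem_singleton_iff, not_or] at h01
      have h0 : 0 < a := lt_of_le_of_ne haI.1 (Ne.symm h01.1)
      have h1 : a < 1 := lt_of_le_of_ne haI.2 h01.2
      rw [← hJa] at hJ0 hJ1
      simp only [Jex1, ← hm] at hJ0 hJ1
      nlinarith [mul_pos h0 (by linarith : 0 < 1 - a)]
    have h01c : μ ({0, 1} : Set ℝ)ᶜ = 0 :=
      measure_mono_null (compl_subset_compl.2 hsupp01) (measSupport_compl_null μ)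
    have hae : (fun a : ℝ => a) =ᵐ[μ] ({1} : Set ℝ).indicator (fun _ => (1:ℝ)) := by
      refine measure_mono_null ?_ h01c
      intro x hx
      simp only [mem_setOf_eq, mem_compl_iff, mem_insert_iff, mem_singleton_iff, not_or]
      constructor
      · intro hx0
        apply hx
        simp [hx0, indicator_apply]
      · intro hx1
        apply hx
        simp [hx1, indicator_apply]
    have hmval : m = (μ {1}).toReal := by
      rw [hm, meanAction, integral_congr_ae hae,
        integral_indicator_const (1:ℝ) (measurableSet_singleton 1)]
      simp
      rfl
    have hsum : μ {0} + μ {1} = 1 := by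
      have h2 : μ ({0, 1} : Set ℝ) + μ ({0, 1} : Set ℝ)ᶜ = μ univ :=
        measure_add_measure_compl (by measurability)
      rw [h01c, add_zero, measure_univ] at h2
      rw [← h2, show ({0, 1} : Set ℝ) = {0} ∪ {1} from rfl,
        measure_union (by simp) (measurableSet_singleton 1)]
    have hm12 : m = 1/2 := by
      by_cases hq : μ {0} = 0
      · have hp1 : μ {1} = 1 := by rwa [hq, zero_add] at hsum
        have h1s : (1:ℝ) ∈ measSupport μ := mem_measSupport_of_singleton (by rw [hp1]; norm_num)
        have hJ1' := hEq 1 h1s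
        rw [← hJ1'] at hJ0
        have hm1 : m = 1 := by rw [hmval, hp1]; simp
        simp only [Jex1, ← hm, hm1] at hJ0
        nlinarith
      · by_cases hp : μ {1} = 0
        · have h0s : (0:ℝ) ∈ measSupport μ := mem_measSupport_of_singleton hq
          have hJ0' := hEq 0 h0s
          rw [← hJ0'] at hJ1
          have hm0 : m = 0 := by rw [hmval, hp]; simp
          simp only [Jex1, ← hm, hm0] at hJ1
          nlinarith
        · have h0s : (0:ℝ) ∈ measSupport μ := mem_measSupport_of_singleton hq
          have h1s : (1:ℝ) ∈ measSupport μ := mem_measSupport_of_singleton hp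
          have e := (hEq 0 h0s).trans (hEq 1 h1s).symm
          simp only [Jex1, ← hm] at e
          linarith
    have hp12 : μ {1} = 1/2 := by
      have ht : (μ {1}).toReal = 1/2 := by rw [← hmval]; exact hm12
      have h := ENNReal.ofReal_toReal (measure_ne_top μ {1})
      rw [ht] at h
      rw [← h, show (1/2 : ℝ) = (2:ℝ)⁻¹ by norm_num,
        ENNReal.ofReal_inv_of_pos (by norm_num)]
      norm_num
    have hq12 : μ {0} = 1/2 := by
      rw [hp12] at hsum
      have hhalf : (1/2 : ℝ≥0∞) + 1/2 = 1 := by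
        rw [ENNReal.div_add_div_same, show (1+1:ℝ≥0∞) = 2 by norm_num]
        exact ENNReal.div_self (by norm_num) (by norm_num)
      have h3 := hsum.trans hhalf.symm
      exact (ENNReal.add_left_inj ((by simp : (1/2:ℝ≥0∞) ≠ ⊤))).1 h3
    ext s hs
    have hdiff : μ (s \ ({0, 1} : Set ℝ)) = 0 :=
      measure_mono_null (diff_subset_compl s _) h01c
    have hdecomp : μ s = μ (s ∩ {0}) + μ (s ∩ {1}) := by
      have h1 : μ (s ∩ ({0, 1} : Set ℝ)) + μ (s \ ({0, 1} : Set ℝ)) = μ s :=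
        measure_inter_add_diff s (by measurability)
      rw [hdiff, add_zero] at h1
      rw [← h1, show s ∩ ({0, 1} : Set ℝ) = (s ∩ {0}) ∪ (s ∩ {1}) by
        rw [show ({0, 1} : Set ℝ) = {0} ∪ {1} from rfl, inter_union_distrib_left],
        measure_union (((disjoint_singleton (a := (0:ℝ)) (b := 1)).2 (by norm_num)).mono
          inter_subset_right inter_subset_right) (hs.inter (measurableSet_singleton 1))]
    rw [hdecomp, Measure.smul_apply, Measure.add_apply, Measure.dirac_apply' _ hs,
      Measure.dirac_apply' _ hs, smul_eq_mul]
    by_cases h0s : (0:ℝ) ∈ s <;> by_cases h1s : (1:ℝ) ∈ s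
    · rw [inter_eq_self_of_subset_right (singleton_subset_iff.2 h0s),
        inter_eq_self_of_subset_right (singleton_subset_iff.2 h1s), hp12, hq12]
      simp [indicator_apply, h0s, h1s]
      rw [mul_add, mul_one]
    · rw [inter_eq_self_of_subset_right (singleton_subset_iff.2 h0s),
        inter_singleton_eq_empty.2 h1s, hq12]
      simp [indicator_apply, h0s, h1s]
    · rw [inter_singleton_eq_empty.2 h0s,
        inter_eq_self_of_subset_right (singleton_subset_iff.2 h1s), hp12]
      simp [indicator_apply, h0s, h1s]
    · rw [inter_singleton_eq_empty.2 h0s, inter_singleton_eq_empty.2 h1s]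
      simp [indicator_apply, h0s, h1s]
  · intro h
    subst h
    have hmean : meanAction ((1/2 : ℝ≥0∞) • (Measure.dirac (0:ℝ) + Measure.dirac (1:ℝ))) = 1/2 :=
      mean_half
    set ν := (1/2 : ℝ≥0∞) • (Measure.dirac (0:ℝ) + Measure.dirac (1:ℝ)) with hν
    have hJ : ∀ b : ℝ, Jex1 ν b = 1/2 - b + b^2 := by
      intro b
      rw [Jex1, hν, hmean]
      ring
    have hbdd : BddAbove (range fun b : Icc (0:ℝ) 1 => Jex1 ν (b : ℝ)) := by
      refine ⟨1/2, ?_⟩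
      rintro y ⟨b, rfl⟩
      simp only [hJ]
      nlinarith [b.2.1, b.2.2]
    have hsup : (⨆ b : Icc (0:ℝ) 1, Jex1 ν (b : ℝ)) = 1/2 := by
      apply le_antisymm
      · apply ciSup_le
        intro b
        show Jex1 ν (b:ℝ) ≤ 1/2
        rw [hJ]
        nlinarith [b.2.1, b.2.2]
      · have h := le_ciSup hbdd ⟨(0:ℝ), by norm_num⟩
        rw [hJ] at h
        norm_num at h
        exact h
    intro a ha
    have ha01 : a ∈ ({0, 1} : Set ℝ) := by
      by_contra h01
      apply ha (({0, 1} : Set ℝ)ᶜ)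
      · refine (isOpen_compl_iff.2 ?_).mem_nhds h01
        rw [show ({0, 1} : Set ℝ) = {0} ∪ {1} from rfl]
        exact isClosed_singleton.union isClosed_singleton
      · have hms : MeasurableSet (({0, 1} : Set ℝ)ᶜ) := by measurability
        rw [hν, Measure.smul_apply, Measure.add_apply, Measure.dirac_apply' _ hms,
          Measure.dirac_apply' _ hms]
        simp [indicator_apply]
    rw [hsup]
    rcases ha01 with h | h
    · rw [h, hJ]
      norm_num
    · rw [mem_singleton_iff.1 h, hJ]
      norm_num
end

section
/- Let 0 < c < 1, m₀ ∈ [0,1], and let (m_n)_{n≥0} ⊆ [0,1] and (b_n)_{n≥1} ⊆ {0,1} be sequences satisfying, for every n ≥ 0: b_{n+1} = 1 whenever m_n < 1/2, b_{n+1} = 0 whenever m_n > 1/2 (b_{n+1} arbitrary in {0,1} when m_n = 1/2), and m_{n+1} = c·b_{n+1} + (1 − c)·m_n. Then: (i) the sets {n ≥ 1 : b_n = 0} and {n ≥ 1 : b_n = 1} are both infinite; and (ii) there exists N such that |m_n − 1/2| ≤ c for all n ≥ N. -/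
/-!
Write `d n = |m n - 1/2|`. The update pulls the estimate towards the action on the other side
of `1/2`, so `d (n + 1) ≤ max c (d n - c/2)`: the distance drops by `c/2` per step until it
is at most `c`. If action `1` were played forever, the estimate would stay at most `1/2` while
rising by at least `c/2` per step, which is absurd; so action `0` recurs, and by the symmetry
`m ↦ 1 - m`, `b ↦ 1 - b` so does action `1`.
-/

open Set Filter

theorem eventually_le_of_eventually_le_max_sub {d : ℕ → ℝ} {a δ : ℝ} (hδ : 0 < δ)
    (h : ∀ᶠ n in atTop, d (n + 1) ≤ max a (d n - δ)) : ∀ᶠ n in atTop, d n ≤ a := by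
  obtain ⟨M, hM⟩ := eventually_atTop.1 h
  have bound : ∀ k : ℕ, d (M + k) ≤ max a (d M - k * δ) := by
    intro k
    induction k with
    | zero => simp
    | succ k ih =>
      refine (hM (M + k) (Nat.le_add_right M k)).trans (max_le (le_max_left _ _) ?_)
      rcases le_max_iff.1 ih with ih | ih
      · exact le_max_of_le_left (by linarith)
      · exact le_max_of_le_right (by push_cast; linarith)
  obtain ⟨K, hK⟩ := exists_nat_gt ((d M - a) / δ)
  refine eventually_atTop.2 ⟨M + K, fun n hn => ?_⟩
  obtain ⟨k, rfl⟩ := Nat.exists_eq_add_of_le hn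
  have hKk : d M - a < ((K + k : ℕ) : ℝ) * δ := by
    rw [div_lt_iff₀ hδ] at hK
    push_cast
    have := mul_nonneg k.cast_nonneg hδ.le
    linarith
  rw [add_assoc]
  exact (bound (K + k)).trans (max_le le_rfl (by linarith))

structure IsNaiveLearning (c : ℝ) (m b : ℕ → ℝ) : Prop where
  action : ∀ n ≥ 1, b n = 0 ∨ b n = 1
  eq_one_of_lt : ∀ n, m n < 1 / 2 → b (n + 1) = 1
  eq_zero_of_gt : ∀ n, 1 / 2 < m n → b (n + 1) = 0
  update : ∀ n, m (n + 1) = c * b (n + 1) + (1 - c) * m n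

namespace IsNaiveLearning

variable {c : ℝ} {m b : ℕ → ℝ}

theorem reflect (h : IsNaiveLearning c m b) :
    IsNaiveLearning c (fun n => 1 - m n) (fun n => 1 - b n) where
  action n hn := by rcases h.action n hn with hb | hb <;> simp [hb]
  eq_one_of_lt n hn := by rw [h.eq_zero_of_gt n (by linarith)]; norm_num
  eq_zero_of_gt n hn := by rw [h.eq_one_of_lt n (by linarith)]; norm_num
  update n := by rw [h.update n]; ring

theorem abs_sub_half_succ_le (h : IsNaiveLearning c m b) (hc0 : 0 ≤ c) (hc1 : c ≤ 1)
    (n : ℕ) : |m (n + 1) - 1 / 2| ≤ max c (|m n - 1 / 2| - c / 2) := by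
  rw [h.update n]
  rcases lt_trichotomy (m n) (1 / 2) with hlt | heq | hgt
  · rw [h.eq_one_of_lt n hlt, abs_of_neg (by linarith : m n - 1 / 2 < 0), abs_le]
    have := mul_nonneg hc0 (by linarith : 0 ≤ 1 / 2 - m n)
    have := mul_nonneg (sub_nonneg.2 hc1) (by linarith : 0 ≤ 1 / 2 - m n)
    constructor <;> linarith [le_max_left c (-(m n - 1 / 2) - c / 2),
      le_max_right c (-(m n - 1 / 2) - c / 2)]
  · refine le_max_of_le_left ?_
    rw [heq, abs_le]
    rcases h.action (n + 1) (Nat.le_add_left 1 n) with hb | hb <;> rw [hb] <;>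
      constructor <;> linarith
  · rw [h.eq_zero_of_gt n hgt, abs_of_pos (by linarith : 0 < m n - 1 / 2), abs_le]
    have := mul_nonneg hc0 (by linarith : 0 ≤ m n - 1 / 2)
    have := mul_nonneg (sub_nonneg.2 hc1) (by linarith : 0 ≤ m n - 1 / 2)
    constructor <;> linarith [le_max_left c (m n - 1 / 2 - c / 2),
      le_max_right c (m n - 1 / 2 - c / 2)]

theorem eventually_abs_sub_half_le (h : IsNaiveLearning c m b) (hc0 : 0 < c) (hc1 : c ≤ 1) :
    ∀ᶠ n in atTop, |m n - 1 / 2| ≤ c :=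
  eventually_le_of_eventually_le_max_sub (half_pos hc0)
    (Eventually.of_forall (h.abs_sub_half_succ_le hc0.le hc1))

theorem frequently_eq_zero (h : IsNaiveLearning c m b) (hc0 : 0 < c) :
    ∃ᶠ n in atTop, b n = 0 := by
  intro hne
  have hone : ∀ᶠ n in atTop, b (n + 1) = 1 :=
    ((tendsto_add_atTop_nat 1).eventually hne).mono fun n hn =>
      (h.action (n + 1) (Nat.le_add_left 1 n)).resolve_left hn
  have hle : ∀ᶠ n in atTop, m n ≤ 1 / 2 :=
    hone.mono fun n hn => not_lt.1 fun hgt => by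
      rw [h.eq_zero_of_gt n hgt] at hn; norm_num at hn
  have hdrift : ∀ᶠ n in atTop, 1 / 2 - m (n + 1) ≤ max (-c) (1 / 2 - m n - c / 2) :=
    (hone.and hle).mono fun n ⟨hb, hm⟩ =>
      le_max_of_le_right (by rw [h.update n, hb]; nlinarith)
  obtain ⟨n, hhalf, hfar⟩ :=
    (hle.and (eventually_le_of_eventually_le_max_sub (d := fun n => 1 / 2 - m n)
      (half_pos hc0) hdrift)).exists
  linarith

theorem frequently_eq_one (h : IsNaiveLearning c m b) (hc0 : 0 < c) :
    ∃ᶠ n in atTop, b n = 1 :=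
  h.reflect.frequently_eq_zero hc0 |>.mono fun n hn => by linarith

end IsNaiveLearning

theorem stmt8_general
    (c : ℝ) (hc0 : 0 < c) (hc1 : c < 1)
    (m : ℕ → ℝ) (b : ℕ → ℝ)
    (hb01 : ∀ n ≥ 1, b n = 0 ∨ b n = 1)
    (hb1 : ∀ n, m n < 1/2 → b (n+1) = 1)
    (hb0 : ∀ n, m n > 1/2 → b (n+1) = 0)
    (hrec : ∀ n, m (n+1) = c * b (n+1) + (1 - c) * m n) :
    {n | 1 ≤ n ∧ b n = 0}.Infinite ∧ {n | 1 ≤ n ∧ b n = 1}.Infinite ∧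
      ∃ N, ∀ n ≥ N, |m n - 1/2| ≤ c := by
  have h : IsNaiveLearning c m b := ⟨hb01, hb1, hb0, hrec⟩
  have hpos : ∀ᶠ n in atTop, 1 ≤ n := eventually_ge_atTop 1
  exact ⟨Nat.frequently_atTop_iff_infinite.1 (hpos.and_frequently (h.frequently_eq_zero hc0)),
    Nat.frequently_atTop_iff_infinite.1 (hpos.and_frequently (h.frequently_eq_one hc0)),
    eventually_atTop.1 (h.eventually_abs_sub_half_le hc0 hc1.le)⟩

/-- dynamics of the naive learning algorithm of Examples 1 and 2.
`m n` is the estimated population mean action, `b (n+1) ∈ {0,1}` is the optimal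
action under the current estimate (equal to `1` when `m n < 1/2`, to `0` when
`m n > 1/2`), and `m (n+1) = c·b (n+1) + (1−c)·m n`. Then both actions `0` and `1`
are played infinitely often, and eventually `|m n − 1/2| ≤ c`. -/
theorem stmt8
    (c : ℝ) (hc0 : 0 < c) (hc1 : c < 1)
    (m : ℕ → ℝ) (b : ℕ → ℝ)
    (hm : ∀ n, m n ∈ Icc (0:ℝ) 1)
    (hb01 : ∀ n ≥ 1, b n = 0 ∨ b n = 1)
    (hb1 : ∀ n, m n < 1/2 → b (n+1) = 1)
    (hb0 : ∀ n, m n > 1/2 → b (n+1) = 0)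
    (hrec : ∀ n, m (n+1) = c * b (n+1) + (1 - c) * m n) :
    {n | 1 ≤ n ∧ b n = 0}.Infinite ∧ {n | 1 ≤ n ∧ b n = 1}.Infinite ∧
      ∃ N, ∀ n ≥ N, |m n - 1/2| ≤ c :=
  stmt8_general c hc0 hc1 m b hb01 hb1 hb0 hrec
end
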